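/- With the Fibonacci-graph sequences as above, the total G_3-Catalan number satisfies c_n = c_n(1) + c_n(2) = (2/(n+1))·binom(3n, n) for n ≥ 1; in particular c_1 = 3, c_2 = 10, c_3 = 42, c_4 = 198. -/

import Mathlib

/-!
We show `c_n(1) = R_{3,2}(n)` and `c_n(2) = R_{3,1}(n)` for the Raney numbers
`R_{p,r}(n) = r/(r+pn) * binom(r+pn, n)`, which count forests of `r` rooted `p`-ary trees with
`n` internal nodes. They form a convolution family,
`∑ₖ R_{p,r}(k) R_{p,s}(n-k) = R_{p,r+s}(n)`, which follows by induction from the Pascal-type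
rule `R_{p,r+1}(n+1) = R_{p,r}(n+1) + R_{p,r+p}(n)` (the first tree is a leaf, or its root is
replaced by its `p` subtrees). With `R_{3,1}(n+1) = R_{3,3}(n)`, the convolution identity
turns both recurrences into that rule, and `R_{3,2}(n) + R_{3,1}(n) = 2/(n+1) * binom(3n, n)` is
a binomial computation.
-/

open Finset

/-- The Raney number `R_{p,r}(n)`; the case `n = 0` is split off so that `R_{p,0}(0) = 1`. -/
noncomputable def raney (p r n : ℕ) : ℚ :=
  if n = 0 then 1 else r / (r + p * n) * (r + p * n).choose n

@[simp] lemma raney_zero (p r : ℕ) : raney p r 0 = 1 := if_pos rfl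

lemma raney_of_ne_zero (p r : ℕ) {n : ℕ} (hn : n ≠ 0) :
    raney p r n = r / (r + p * n) * (r + p * n).choose n := if_neg hn

lemma raney_zero_of_ne_zero (p : ℕ) {n : ℕ} (hn : n ≠ 0) : raney p 0 n = 0 := by
  simp [raney_of_ne_zero p 0 hn]

lemma raney_succ_succ (p r n : ℕ) :
    raney p (r + 1) (n + 1) = raney p r (n + 1) + raney p (r + p) n := by
  simp only [raney_of_ne_zero _ _ n.succ_ne_zero]
  rcases eq_or_ne n 0 with rfl | hn
  · rcases eq_or_ne (r + p) 0 with h | h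
    · obtain ⟨rfl, rfl⟩ : r = 0 ∧ p = 0 := by omega
      simp
    · have h' : (r : ℚ) + p ≠ 0 := by exact_mod_cast h
      push_cast [Nat.choose_one_right, raney_zero]
      rw [div_mul_cancel₀ _ (by positivity), mul_one, div_mul_cancel₀ _ h']
  set N := r + p * (n + 1) with hN
  rw [raney_of_ne_zero _ _ hn, show r + 1 + p * (n + 1) = N + 1 by omega,
    show r + p + p * n = N by rw [hN]; ring]
  rcases eq_or_ne N 0 with h0 | h0
  · obtain ⟨rfl, rfl⟩ : r = 0 ∧ p = 0 := by simpa [hN] using h0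
    simp [h0, Nat.choose_eq_zero_of_lt (by omega : 1 < n + 1)]
  have hC1 : (N.choose (n + 1) : ℚ) = (N + 1).choose (n + 1) - N.choose n := by
    rw [Nat.choose_succ_succ' N n]; push_cast; ring
  have hC2 : ((N + 1).choose (n + 1) : ℚ) = (N + 1) * N.choose n / (n + 1) := by
    rw [eq_div_iff (by positivity)]; exact_mod_cast (Nat.add_one_mul_choose_eq N n).symm
  have hNr : (N : ℚ) = r + p * (n + 1) := by rw [hN]; push_cast; ring
  have hN0 : (N : ℚ) ≠ 0 := by exact_mod_cast h0
  push_cast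
  rw [show (r : ℚ) + 1 + p * (n + 1) = N + 1 by rw [hNr]; ring,
    show (r : ℚ) + p * (n + 1) = N by rw [hNr], show (r : ℚ) + p + p * n = N by rw [hNr]; ring,
    hC1, hC2]
  field_simp
  rw [hNr]
  ring

lemma sum_range_raney_mul_raney (p n r s : ℕ) :
    ∑ k ∈ range (n + 1), raney p r k * raney p s (n - k) = raney p (r + s) n := by
  induction n generalizing r s with
  | zero => simp
  | succ n ih =>
    induction s with
    | zero =>
      rw [sum_range_succ, sum_eq_zero fun k hk => by
        rw [raney_zero_of_ne_zero p (by grind), mul_zero]]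
      simp
    | succ s ihs =>
      have split : ∀ k ∈ range (n + 1), raney p r k * raney p (s + 1) (n + 1 - k) =
          raney p r k * raney p s (n + 1 - k) + raney p r k * raney p (s + p) (n - k) := by
        intro k hk
        rw [show n + 1 - k = n - k + 1 by grind, raney_succ_succ]
        ring
      rw [sum_range_succ, Nat.sub_self, raney_zero, mul_one] at ihs
      calc ∑ k ∈ range (n + 1 + 1), raney p r k * raney p (s + 1) (n + 1 - k)
          = ∑ k ∈ range (n + 1), raney p r k * raney p (s + 1) (n + 1 - k) +
            raney p r (n + 1) := by
            rw [sum_range_succ, Nat.sub_self, raney_zero, mul_one]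
        _ = (∑ k ∈ range (n + 1), raney p r k * raney p s (n + 1 - k) + raney p r (n + 1)) +
            ∑ k ∈ range (n + 1), raney p r k * raney p (s + p) (n - k) := by
            rw [sum_congr rfl split, sum_add_distrib]; ring
        _ = raney p (r + (s + 1)) (n + 1) := by
            rw [ihs, ih, ← add_assoc, ← raney_succ_succ, add_assoc]

lemma raney_one_succ (p n : ℕ) : raney p 1 (n + 1) = raney p p n := by
  simpa [raney_zero_of_ne_zero p n.succ_ne_zero] using raney_succ_succ p 0 n

lemma raney_three_two_add_raney_three_one {n : ℕ} (hn : n ≠ 0) :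
    raney 3 2 n + raney 3 1 n = 2 / (n + 1) * (3 * n).choose n := by
  have h₁ : ((3 * n + 1).choose n : ℚ) * (2 * n + 1) = (3 * n).choose n * (3 * n + 1) := by
    have := Nat.choose_mul_succ_eq (3 * n) n
    rw [show 3 * n + 1 - n = 2 * n + 1 by omega] at this
    exact_mod_cast this.symm
  have h₂ : ((3 * n + 2).choose n : ℚ) * (2 * n + 2) = (3 * n + 1).choose n * (3 * n + 2) := by
    have := Nat.choose_mul_succ_eq (3 * n + 1) n
    rw [show 3 * n + 1 + 1 - n = 2 * n + 2 by omega] at this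
    exact_mod_cast this.symm
  rw [raney_of_ne_zero _ _ hn, raney_of_ne_zero _ _ hn, add_comm 2, add_comm 1,
    eq_div_of_mul_eq (by positivity) h₂, eq_div_of_mul_eq (by positivity) h₁]
  push_cast
  field_simp
  ring

theorem eq_raney_of_recurrence (c₁ c₂ : ℕ → ℕ) (h01 : c₁ 0 = 1) (h02 : c₂ 0 = 1)
    (hrec1 : ∀ n, c₁ (n + 1) = ∑ k ∈ range (n + 1), c₁ (n - k) * (c₁ k + c₂ k))
    (hrec2 : ∀ n, c₂ (n + 1) = ∑ k ∈ range (n + 1), c₂ (n - k) * c₁ k) (n : ℕ) :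
    (c₁ n : ℚ) = raney 3 2 n ∧ (c₂ n : ℚ) = raney 3 1 n := by
  induction n using Nat.strong_induction_on with
  | _ n ih =>
  rcases n with _ | n
  · simp [h01, h02]
  have ih₁ : ∀ k ≤ n, (c₁ k : ℚ) = raney 3 2 k := fun k hk => (ih k (by omega)).1
  have ih₂ : ∀ k ≤ n, (c₂ k : ℚ) = raney 3 1 k := fun k hk => (ih k (by omega)).2
  constructor
  · rw [hrec1]
    push_cast
    rw [sum_congr rfl fun k hk => by
      rw [ih₁ _ (n.sub_le k), ih₁ k (by grind), ih₂ k (by grind), mul_comm, add_mul]]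
    rw [sum_add_distrib, sum_range_raney_mul_raney, sum_range_raney_mul_raney,
      raney_succ_succ, raney_one_succ]
    ring
  · rw [hrec2]
    push_cast
    rw [sum_congr rfl fun k hk => by rw [ih₂ _ (n.sub_le k), ih₁ k (by grind), mul_comm],
      sum_range_raney_mul_raney, raney_one_succ]

/-- For the Fibonacci graph `G₃`, the total `G₃`-Catalan number
`c_n = c_n(1) + c_n(2)` equals `(2/(n+1)) * binom(3n, n)` for `n ≥ 1`; in particular
`c₁ = 3`, `c₂ = 10`, `c₃ = 42`, `c₄ = 198`. -/
theorem fibonacci_graph_catalan_total (c₁ c₂ : ℕ → ℕ)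
    (h01 : c₁ 0 = 1) (h02 : c₂ 0 = 1)
    (hrec1 : ∀ n, c₁ (n + 1) =
      ∑ k ∈ Finset.range (n + 1), c₁ (n - k) * (c₁ k + c₂ k))
    (hrec2 : ∀ n, c₂ (n + 1) =
      ∑ k ∈ Finset.range (n + 1), c₂ (n - k) * c₁ k) :
    (∀ n : ℕ, 1 ≤ n →
      ((c₁ n + c₂ n : ℕ) : ℚ) = (2 / (n + 1)) * (Nat.choose (3 * n) n)) ∧
    c₁ 1 + c₂ 1 = 3 ∧ c₁ 2 + c₂ 2 = 10 ∧ c₁ 3 + c₂ 3 = 42 ∧ c₁ 4 + c₂ 4 = 198 := by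
  have total (n : ℕ) (hn : 1 ≤ n) :
      ((c₁ n + c₂ n : ℕ) : ℚ) = 2 / (n + 1) * (3 * n).choose n := by
    obtain ⟨h₁, h₂⟩ := eq_raney_of_recurrence c₁ c₂ h01 h02 hrec1 hrec2 n
    rw [Nat.cast_add, h₁, h₂, raney_three_two_add_raney_three_one (by omega)]
  have value (n m : ℕ) (hn : 1 ≤ n) (hm : 2 / (n + 1) * (3 * n).choose n = (m : ℚ)) :
      c₁ n + c₂ n = m := by
    exact_mod_cast (total n hn).trans hm
  exact ⟨total, value 1 3 (by norm_num) (by norm_num [Nat.choose]),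
    value 2 10 (by norm_num) (by norm_num [Nat.choose]),
    value 3 42 (by norm_num) (by norm_num [Nat.choose]),
    value 4 198 (by norm_num) (by norm_num [Nat.choose])⟩
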